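/- Let p > 0, 0 < δ < p, λ > 0, μ > 0, q > 0, and define q^±(q), q^±_Y(q) as in the Cramér–Lundberg model. Then q⁺(q)/(q⁺(q) − q⁺_Y(q)) = −((p−δ)/δ)·(q⁺(q) − q⁻_Y(q))/(q⁺(q) + μ) and q⁻(q)/(q⁻(q) − q⁺_Y(q)) = −((p−δ)/δ)·(q⁻(q) − q⁻_Y(q))/(q⁻(q) + μ). -/

import Mathlib

/- Cramér–Lundberg model: q^±(q) = (q + λ − μp ± √((q + λ − μp)² + 4pqμ))/(2p)
   and q^±_Y(q) given by the same formula with p replaced by p − δ. -/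

noncomputable def qp (p lam μ q : ℝ) : ℝ :=
  (q + lam - μ * p + Real.sqrt ((q + lam - μ * p) ^ 2 + 4 * p * q * μ)) / (2 * p)

noncomputable def qm (p lam μ q : ℝ) : ℝ :=
  (q + lam - μ * p - Real.sqrt ((q + lam - μ * p) ^ 2 + 4 * p * q * μ)) / (2 * p)

lemma disc_nonneg (p lam μ q : ℝ) (hp : 0 < p) (hμ : 0 < μ) (hq : 0 < q) :
    0 ≤ (q + lam - μ * p) ^ 2 + 4 * p * q * μ := by nlinarith [sq_nonneg (q + lam - μ * p), mul_pos (mul_pos hp hq) hμ]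

lemma qp_root (p lam μ q : ℝ) (hp : 0 < p) (hμ : 0 < μ) (hq : 0 < q) :
    p * (qp p lam μ q) ^ 2 = (q + lam - μ * p) * qp p lam μ q + q * μ := by
  have hs : Real.sqrt ((q + lam - μ * p) ^ 2 + 4 * p * q * μ) ^ 2
      = (q + lam - μ * p) ^ 2 + 4 * p * q * μ :=
    Real.sq_sqrt (disc_nonneg p lam μ q hp hμ hq)
  unfold qp
  generalize Real.sqrt ((q + lam - μ * p) ^ 2 + 4 * p * q * μ) = s at hs ⊢
  have h2p : (2 * p) ≠ 0 := by positivity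
  field_simp
  linear_combination hs

lemma qm_root (p lam μ q : ℝ) (hp : 0 < p) (hμ : 0 < μ) (hq : 0 < q) :
    p * (qm p lam μ q) ^ 2 = (q + lam - μ * p) * qm p lam μ q + q * μ := by
  have hs : Real.sqrt ((q + lam - μ * p) ^ 2 + 4 * p * q * μ) ^ 2
      = (q + lam - μ * p) ^ 2 + 4 * p * q * μ :=
    Real.sq_sqrt (disc_nonneg p lam μ q hp hμ hq)
  unfold qm
  generalize Real.sqrt ((q + lam - μ * p) ^ 2 + 4 * p * q * μ) = s at hs ⊢
  have h2p : (2 * p) ≠ 0 := by positivity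
  field_simp
  linear_combination hs

lemma qp_pos (p lam μ q : ℝ) (hp : 0 < p) (hlam : 0 < lam) (hμ : 0 < μ) (hq : 0 < q) :
    0 < qp p lam μ q := by
  unfold qp
  apply div_pos _ (by positivity)
  have h : |q + lam - μ * p| < Real.sqrt ((q + lam - μ * p) ^ 2 + 4 * p * q * μ) := by
    rw [← Real.sqrt_sq_eq_abs]
    apply Real.sqrt_lt_sqrt (sq_nonneg _)
    nlinarith [mul_pos (mul_pos hp hq) hμ]
  have := neg_abs_le (q + lam - μ * p)
  linarith
lemma qm_add_mu_pos (p lam μ q : ℝ) (hp : 0 < p) (hlam : 0 < lam) (hμ : 0 < μ) (hq : 0 < q) :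
    0 < qm p lam μ q + μ := by
  unfold qm
  have h : Real.sqrt ((q + lam - μ * p) ^ 2 + 4 * p * q * μ) < q + lam - μ * p + 2 * p * μ := by
    rw [Real.sqrt_lt' (by nlinarith [mul_pos (mul_pos hp hμ) hq, mul_pos hp hμ])]
    nlinarith [mul_pos (mul_pos hp hμ) hlam]
  rw [div_add' _ _ _ (by positivity : (2:ℝ) * p ≠ 0)]
  apply div_pos _ (by positivity)
  linarith

lemma sum_rel (p lam μ q : ℝ) (hp : 0 < p) :
    p * (qp p lam μ q + qm p lam μ q) = q + lam - μ * p := by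
  unfold qp qm
  field_simp
  ring

lemma mul_rel (p lam μ q : ℝ) (hp : 0 < p) (hμ : 0 < μ) (hq : 0 < q) :
    p * (qp p lam μ q * qm p lam μ q) = -(q * μ) := by
  have hs : Real.sqrt ((q + lam - μ * p) ^ 2 + 4 * p * q * μ) ^ 2
      = (q + lam - μ * p) ^ 2 + 4 * p * q * μ :=
    Real.sq_sqrt (disc_nonneg p lam μ q hp hμ hq)
  unfold qp qm
  generalize Real.sqrt ((q + lam - μ * p) ^ 2 + 4 * p * q * μ) = s at hs ⊢
  have h2p : (2 * p) ≠ 0 := by positivity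
  field_simp
  linear_combination (-1) * hs

lemma aux (p δ lam μ q x : ℝ) (hp : 0 < p) (hδ : 0 < δ) (hδp : δ < p)
    (hlam : 0 < lam) (hμ : 0 < μ) (hq : 0 < q)
    (hx : p * x ^ 2 = (q + lam - μ * p) * x + q * μ) (hxμ : x + μ ≠ 0) :
    x / (x - qp (p - δ) lam μ q)
      = -((p - δ) / δ) * (x - qm (p - δ) lam μ q) / (x + μ) := by
  have hpd : 0 < p - δ := by linarith
  set A := qp (p - δ) lam μ q with hA
  set B := qm (p - δ) lam μ q with hB
  have hsum : (p - δ) * (A + B) = q + lam - μ * (p - δ) := sum_rel _ lam μ q hpd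
  have hmul : (p - δ) * (A * B) = -(q * μ) := mul_rel _ lam μ q hpd hμ hq
  have hx0 : x ≠ 0 := by
    intro h
    rw [h] at hx
    simp at hx
    rcases hx with h1 | h1 <;> linarith
  have hprod : (p - δ) * (x - A) * (x - B) = -δ * x * (x + μ) := by
    linear_combination hx - x * hsum + hmul
  have hne : x - A ≠ 0 := by
    intro h
    have h0 : -δ * x * (x + μ) = 0 := by rw [← hprod, h]; ring
    exact mul_ne_zero (mul_ne_zero (neg_ne_zero.mpr (ne_of_gt hδ)) hx0) hxμ h0
  rw [div_eq_div_iff hne hxμ]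
  have hδ0 : δ ≠ 0 := ne_of_gt hδ
  field_simp
  linear_combination -hprod + 2 * hx - 2 * x * hsum + 2 * hmul

theorem parameter_relations_CL_second (p δ lam μ q : ℝ)
    (hp : 0 < p) (hδ : 0 < δ) (hδp : δ < p) (hlam : 0 < lam) (hμ : 0 < μ) (hq : 0 < q) :
    qp p lam μ q / (qp p lam μ q - qp (p - δ) lam μ q)
      = -((p - δ) / δ) * (qp p lam μ q - qm (p - δ) lam μ q) / (qp p lam μ q + μ) ∧
    qm p lam μ q / (qm p lam μ q - qp (p - δ) lam μ q)
      = -((p - δ) / δ) * (qm p lam μ q - qm (p - δ) lam μ q) / (qm p lam μ q + μ) := by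
  constructor
  · exact aux p δ lam μ q _ hp hδ hδp hlam hμ hq (qp_root p lam μ q hp hμ hq)
      (by have := qp_pos p lam μ q hp hlam hμ hq; positivity)
  · exact aux p δ lam μ q _ hp hδ hδp hlam hμ hq (qm_root p lam μ q hp hμ hq)
      (ne_of_gt (qm_add_mu_pos p lam μ q hp hlam hμ hq))
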